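/- arXiv:1409.2815 — 6 statements merged into one kernel-verified Lean document; each statement's English description precedes it below -/
import Mathlib

section
/- Let a ≥ 2, p a prime with p ∤ a, and let e ≥ 1. Setting m = p^e · o_p(a), the prime p divides Φ_m(a). (Converse direction: every m of this form gives p | Φ_m(a).) -/
/-!
Over `𝔽_p`, `Φ_{p^e m} = Φ_m ^ φ(p^e)` whenever `p ∤ m`, and `a mod p` is a primitive
`o_p(a)`-th root of unity, hence a root of `Φ_{o_p(a)}`; here `o_p(a) ∣ p - 1` is prime to `p`.
-/

open Polynomial

-- The order of `x` divides `q - 1`, which is `-1` in `K`.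
theorem FiniteField.natCast_orderOf_ne_zero {K : Type*} [Field K] [Fintype K] {x : K}
    (hx : x ≠ 0) : (orderOf x : K) ≠ 0 := by
  obtain ⟨c, hc⟩ := orderOf_dvd_of_pow_eq_one (FiniteField.pow_card_sub_one_eq_one x hx)
  have hq : ((Fintype.card K - 1 : ℕ) : K) = -1 := by
    rw [Nat.cast_sub Fintype.card_pos, FiniteField.cast_card_eq_zero, Nat.cast_one, zero_sub]
  intro h
  rw [hc, Nat.cast_mul, h, zero_mul] at hq
  exact one_ne_zero (neg_eq_zero.mp hq.symm)

theorem FiniteField.isRoot_cyclotomic_prime_pow_mul_orderOf {K : Type*} [Field K] [Fintype K]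
    (p : ℕ) [Fact p.Prime] [CharP K p] (k : ℕ) {x : K} (hx : x ≠ 0) :
    (cyclotomic (p ^ k * orderOf x) K).IsRoot x :=
  haveI : NeZero (orderOf x : K) := ⟨natCast_orderOf_ne_zero hx⟩
  isRoot_cyclotomic_prime_pow_mul_iff_of_charP.mpr (IsPrimitiveRoot.orderOf x)

theorem prime_dvd_cyclotomic_eval_pow_mul_orderOf_general
    (a : ℤ) (p : ℕ) (hp : p.Prime) (hpa : ¬ (p : ℤ) ∣ a)
    (e : ℕ) :
    (p : ℤ) ∣ (Polynomial.cyclotomic (p ^ e * orderOf ((a : ZMod p))) ℤ).eval a := by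
  have : Fact p.Prime := ⟨hp⟩
  have ha : (a : ZMod p) ≠ 0 := by rwa [Ne, ZMod.intCast_zmod_eq_zero_iff_dvd]
  rw [← ZMod.intCast_zmod_eq_zero_iff_dvd, ← eq_intCast (Int.castRingHom (ZMod p)),
    ← cyclotomic.eval_apply, eq_intCast]
  exact FiniteField.isRoot_cyclotomic_prime_pow_mul_orderOf p e ha

/-- For `a ≥ 2`, `p` prime with `p ∤ a`, and `e ≥ 1`, setting
`m = p ^ e * o_p(a)` one has `p ∣ Φ_m(a)`. -/
theorem prime_dvd_cyclotomic_eval_pow_mul_orderOf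
    (a : ℤ) (ha : 2 ≤ a) (p : ℕ) (hp : p.Prime) (hpa : ¬ (p : ℤ) ∣ a)
    (e : ℕ) (he : 1 ≤ e) :
    (p : ℤ) ∣ (Polynomial.cyclotomic (p ^ e * orderOf ((a : ZMod p))) ℤ).eval a :=
  prime_dvd_cyclotomic_eval_pow_mul_orderOf_general a p hp hpa e
end

section
/- Let a ≥ 2, p an odd prime with p ∤ a, and suppose m = p^e · m' with e ≥ 1 and p ∤ m', where m' = o_p(a). Then p² does not divide Φ_m(a). -/
/-!
Put `d = m / p = p ^ (e - 1) * m'` and `b = a ^ d`. Since `o_p(a) ∣ d`, `b ≡ 1 (mod p)`, and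
`Φ_m(a)` divides `(b ^ p - 1) / (b - 1) = 1 + b + ⋯ + b ^ (p - 1)`. For odd `p` this sum is
`≡ p (mod p²)`, so it is not divisible by `p²`, and neither is `Φ_m(a)`.
-/

open Polynomial Finset

theorem Polynomial.cyclotomic_mul_dvd_geom_sum_X_pow (R : Type*) [CommRing R] [IsDomain R]
    {d p : ℕ} (hp : 1 < p) :
    cyclotomic (d * p) R ∣ ∑ i ∈ range p, (X ^ d) ^ i := by
  rcases d.eq_zero_or_pos with rfl | hd
  · simp
  have hdvd := X_pow_sub_one_mul_cyclotomic_dvd_X_pow_sub_one_of_dvd R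
    (Nat.mem_properDivisors.mpr ⟨dvd_mul_right d p, lt_mul_right hd hp⟩)
  rwa [pow_mul, ← geom_sum_mul (X ^ d) p, mul_comm _ (X ^ d - 1),
    mul_dvd_mul_iff_left (by simpa using X_pow_sub_C_ne_zero hd (1 : R))] at hdvd

theorem Int.sq_dvd_geom_sum_sub_of_dvd_sub_one {n : ℕ} {b : ℤ} (hn : Odd n)
    (hb : (n : ℤ) ∣ b - 1) : (n : ℤ) ^ 2 ∣ ∑ i ∈ Finset.range n, b ^ i - n := by
  obtain ⟨k, hk⟩ := hb
  simpa [show b = 1 + n * k by linarith] using odd_sq_dvd_geom_sum₂_sub 1 k hn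

theorem Int.dvd_pow_sub_one_of_orderOf_dvd {a : ℤ} {n d : ℕ} (h : orderOf (a : ZMod n) ∣ d) :
    (n : ℤ) ∣ a ^ d - 1 := by
  rw [← ZMod.intCast_zmod_eq_zero_iff_dvd]
  push_cast
  rw [orderOf_dvd_iff_pow_eq_one.mp h, sub_self]

theorem not_prime_sq_dvd_cyclotomic_eval_general
    (a : ℤ) (p : ℕ) (hp : p.Prime) (hodd : Odd p)
    (m m' e : ℕ) (he : 1 ≤ e)
    (hm' : m' = orderOf ((a : ZMod p)))
    (hm : m = p ^ e * m') :
    ¬ ((p : ℤ) ^ 2 ∣ (Polynomial.cyclotomic m ℤ).eval a) := by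
  set d := p ^ (e - 1) * m'
  have hmd : m = d * p := by
    rw [hm, mul_right_comm, ← pow_succ, Nat.sub_add_cancel he]
  have hcyc : (cyclotomic m ℤ).eval a ∣ ∑ i ∈ range p, (a ^ d) ^ i := by
    rw [hmd]
    simpa [eval_finsetSum] using eval_dvd (x := a) (cyclotomic_mul_dvd_geom_sum_X_pow ℤ hp.one_lt)
  have hord : orderOf (a : ZMod p) ∣ d := hm' ▸ dvd_mul_left m' _
  have hsum := Int.sq_dvd_geom_sum_sub_of_dvd_sub_one hodd (Int.dvd_pow_sub_one_of_orderOf_dvd hord)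
  intro hsq
  have hpp : (p : ℤ) ^ 2 ∣ (p : ℤ) ^ 1 := by simpa using dvd_sub (hsq.trans hcyc) hsum
  have hpZ := Nat.prime_iff_prime_int.mp hp
  exact absurd ((pow_dvd_pow_iff hpZ.ne_zero hpZ.not_isUnit).mp hpp) (by norm_num)

/-- For `a ≥ 2`, `p` an odd prime with `p ∤ a`, and `m = p ^ e * m'` with
`e ≥ 1`, `p ∤ m'`, and `m' = o_p(a)`, one has `p² ∤ Φ_m(a)`. -/
theorem not_prime_sq_dvd_cyclotomic_eval
    (a : ℤ) (ha : 2 ≤ a) (p : ℕ) (hp : p.Prime) (hodd : Odd p)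
    (hpa : ¬ (p : ℤ) ∣ a) (m m' e : ℕ) (he : 1 ≤ e)
    (hm' : m' = orderOf ((a : ZMod p))) (hpm' : ¬ p ∣ m')
    (hm : m = p ^ e * m') :
    ¬ ((p : ℤ) ^ 2 ∣ (Polynomial.cyclotomic m ℤ).eval a) :=
  not_prime_sq_dvd_cyclotomic_eval_general a p hp hodd m m' e he hm' hm
end

section
/- Let a ≥ 2 and let p be a prime not dividing a. Then p² divides a^{p-1} − 1 if and only if p² divides Φ̃_{d}(a), where d = o_p(a) is the multiplicative order of a modulo p and Φ̃_d(a) = Φ_d(a)/gcd(Φ_d(a), d). -/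
/-!
Write `d = o_p(a)`. Evaluating `X^(p-1) - 1 = ∏_{e ∣ p-1} Φ_e` at `a` gives
`a^(p-1) - 1 = Φ_d(a) · ∏_{e ∣ p-1, e ≠ d} Φ_e(a)`. Every divisor `e` of `p - 1` is prime to `p`, so
`p ∣ Φ_e(a)` makes `a` a primitive `e`-th root of unity mod `p`, i.e. `e = d`; hence the cofactor is
prime to `p`. Likewise `gcd(Φ_d(a), d)` divides `d` and is prime to `p`, so dividing it out does not
change the `p`-adic valuation.
-/

open Polynomial

theorem Prime.pow_dvd_mul_right_iff {M : Type*} [CommMonoidWithZero M]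
    [IsCancelMulZero M] {p a b : M}
    (hp : Prime p) (n : ℕ) (hb : ¬ p ∣ b) : p ^ n ∣ a * b ↔ p ^ n ∣ a :=
  ⟨hp.pow_dvd_of_dvd_mul_right n hb, fun h => h.mul_right b⟩

theorem Prime.pow_dvd_ediv_gcd_iff {q : ℤ} (hq : Prime q) (k : ℕ) {x n : ℤ} (hn : ¬ q ∣ n) :
    q ^ k ∣ x / (Int.gcd x n : ℤ) ↔ q ^ k ∣ x := by
  have hg : ¬ q ∣ (Int.gcd x n : ℤ) := fun h => hn (h.trans (Int.gcd_dvd_right x n))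
  conv_rhs => rw [← Int.ediv_mul_cancel (Int.gcd_dvd_left x n)]
  exact (hq.pow_dvd_mul_right_iff k hg).symm

theorem Nat.not_dvd_of_dvd_sub_one {p e : ℕ} (hp : 2 ≤ p) (he : e ∣ p - 1) : ¬ p ∣ e :=
  fun h => Nat.not_dvd_of_pos_of_lt (by omega) (by omega) (h.trans he)

theorem eval_cyclotomic_mul_prod_erase {R : Type*} [CommRing R] {n d : ℕ} (hd : d ∈ n.divisors)
    (a : R) :
    (cyclotomic d R).eval a * ∏ e ∈ n.divisors.erase d, (cyclotomic e R).eval a = a ^ n - 1 := by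
  have hn : 0 < n := Nat.pos_of_ne_zero (Nat.mem_divisors.mp hd).2
  rw [Finset.mul_prod_erase _ (fun e => (cyclotomic e R).eval a) hd, ← eval_prod,
    prod_cyclotomic_eq_X_pow_sub_one hn]
  simp

theorem eq_orderOf_of_dvd_eval_cyclotomic {p e : ℕ} [Fact p.Prime] {a : ℤ} (he : ¬ p ∣ e)
    (h : (p : ℤ) ∣ (cyclotomic e ℤ).eval a) : e = orderOf (a : ZMod p) := by
  have : NeZero (e : ZMod p) := ⟨by rwa [Ne, ZMod.natCast_eq_zero_iff]⟩
  have hroot : (cyclotomic e (ZMod p)).IsRoot (a : ZMod p) := by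
    rwa [IsRoot.def, ← map_cyclotomic_int, eval_intCast_map, eq_intCast,
      ZMod.intCast_zmod_eq_zero_iff_dvd]
  exact (isRoot_cyclotomic_iff.mp hroot).eq_orderOf

theorem not_dvd_prod_eval_cyclotomic_erase_orderOf {p : ℕ} [hp : Fact p.Prime] (a : ℤ) :
    ¬ (p : ℤ) ∣ ∏ e ∈ (p - 1).divisors.erase (orderOf (a : ZMod p)), (cyclotomic e ℤ).eval a := by
  intro h
  obtain ⟨e, he, hdvd⟩ := (Nat.prime_iff_prime_int.mp hp.out).exists_mem_finset_dvd h
  obtain ⟨hne, he⟩ := Finset.mem_erase.mp he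
  exact hne (eq_orderOf_of_dvd_eval_cyclotomic
    (Nat.not_dvd_of_dvd_sub_one hp.out.two_le (Nat.mem_divisors.mp he).1) hdvd)

theorem fermat_quotient_zero_iff_sq_dvd_tilde_cyclotomic_general
    (a : ℤ) (p : ℕ) (hp : p.Prime) (hpa : ¬ (p : ℤ) ∣ a) :
    (p : ℤ) ^ 2 ∣ a ^ (p - 1) - 1 ↔
      (p : ℤ) ^ 2 ∣
        (Polynomial.cyclotomic (orderOf ((a : ZMod p))) ℤ).eval a /
          (Int.gcd ((Polynomial.cyclotomic (orderOf ((a : ZMod p))) ℤ).eval a)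
            ((orderOf ((a : ZMod p)) : ℕ) : ℤ) : ℤ) := by
  have : Fact p.Prime := ⟨hp⟩
  have hpZ : Prime (p : ℤ) := Nat.prime_iff_prime_int.mp hp
  have hd : orderOf (a : ZMod p) ∣ p - 1 := ZMod.orderOf_dvd_card_sub_one <| by
    rwa [Ne, ZMod.intCast_zmod_eq_zero_iff_dvd]
  have hpd : ¬ (p : ℤ) ∣ (orderOf (a : ZMod p) : ℤ) :=
    Int.natCast_dvd_natCast.not.mpr (Nat.not_dvd_of_dvd_sub_one hp.two_le hd)
  have hmem : orderOf (a : ZMod p) ∈ (p - 1).divisors :=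
    Nat.mem_divisors.mpr ⟨hd, Nat.sub_ne_zero_of_lt hp.one_lt⟩
  rw [← eval_cyclotomic_mul_prod_erase hmem a,
    hpZ.pow_dvd_mul_right_iff 2 (not_dvd_prod_eval_cyclotomic_erase_orderOf a),
    hpZ.pow_dvd_ediv_gcd_iff 2 hpd]

/-- For `a ≥ 2` and `p` a prime not dividing `a`,
`p² ∣ a^(p-1) - 1` iff `p² ∣ Φ̃_d(a)` where `d = o_p(a)`. -/
theorem fermat_quotient_zero_iff_sq_dvd_tilde_cyclotomic
    (a : ℤ) (ha : 2 ≤ a) (p : ℕ) (hp : p.Prime) (hpa : ¬ (p : ℤ) ∣ a) :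
    (p : ℤ) ^ 2 ∣ a ^ (p - 1) - 1 ↔
      (p : ℤ) ^ 2 ∣
        (Polynomial.cyclotomic (orderOf ((a : ZMod p))) ℤ).eval a /
          (Int.gcd ((Polynomial.cyclotomic (orderOf ((a : ZMod p))) ℤ).eval a)
            ((orderOf ((a : ZMod p)) : ℕ) : ℤ) : ℤ) :=
  fermat_quotient_zero_iff_sq_dvd_tilde_cyclotomic_general a p hp hpa
end

section
/- Let a ≥ 2, p a prime with p ∤ a, m = o_p(a) the multiplicative order of a modulo p, and write p − 1 = t·m. Then (a^{p-1} − 1)/p ≡ t · (a^m − 1)/p (mod p). In particular p² | a^{p-1} − 1 if and only if p² | a^m − 1. -/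
lemma aux_binom (p k : ℤ) : ∀ t : ℕ, ∃ c : ℤ, (1 + p*k)^t = 1 + t*(p*k) + p^2*c := by
  intro t
  induction t with
  | zero => exact ⟨0, by ring⟩
  | succ n ih =>
    obtain ⟨c, hc⟩ := ih
    refine ⟨n*k^2 + c + p*c*k, ?_⟩
    rw [pow_succ, hc]
    push_cast
    ring

/-- For `a ≥ 2`, `p` prime with `p ∤ a`, `m = o_p(a)` and `p - 1 = t * m`,
one has `(a^(p-1)-1)/p ≡ t * (a^m - 1)/p (mod p)`; in particular
`p² ∣ a^(p-1)-1 ↔ p² ∣ a^m - 1`. -/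
theorem fermat_quotient_congr_mul_order_quotient
    (a : ℤ) (ha : 2 ≤ a) (p : ℕ) (hp : p.Prime) (hpa : ¬ (p : ℤ) ∣ a)
    (m t : ℕ) (hm : m = orderOf ((a : ZMod p))) (ht : p - 1 = t * m) :
    ((a ^ (p - 1) - 1) / p ≡ t * ((a ^ m - 1) / p) [ZMOD p]) ∧
      ((p : ℤ) ^ 2 ∣ a ^ (p - 1) - 1 ↔ (p : ℤ) ^ 2 ∣ a ^ m - 1) := by
  haveI : Fact p.Prime := ⟨hp⟩
  have hp2 : 2 ≤ p := hp.two_le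
  have hppos : (0:ℤ) < (p:ℤ) := by exact_mod_cast hp.pos
  -- a^m ≡ 1 mod p
  have hzero : ((a : ZMod p))^m = 1 := by
    rw [hm]; exact pow_orderOf_eq_one _
  have hdvd : (p:ℤ) ∣ a^m - 1 := by
    have : ((a^m - 1 : ℤ) : ZMod p) = 0 := by push_cast [hzero]; ring
    exact (ZMod.intCast_zmod_eq_zero_iff_dvd _ _).mp this
  obtain ⟨k, hk⟩ := hdvd
  have hkdiv : (a^m - 1)/p = k := by rw [hk]; exact Int.mul_ediv_cancel_left _ (by positivity)
  have ham : a^m = 1 + p*k := by linarith [hk]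
  obtain ⟨c, hc⟩ := aux_binom (p:ℤ) k t
  have hbig : a^(p-1) = 1 + t*(p*k) + p^2*c := by
    rw [ht, mul_comm, pow_mul, ham, hc]
  have hfac : a^(p-1) - 1 = p * (t*k + p*c) := by rw [hbig]; ring
  have hqdiv : (a^(p-1) - 1)/p = t*k + p*c := by
    rw [hfac]; exact Int.mul_ediv_cancel_left _ (by positivity)
  constructor
  · rw [hqdiv, hkdiv]
    have : (t:ℤ)*k + p*c ≡ t*k + 0 [ZMOD p] :=
      (Int.ModEq.refl _).add (Int.modEq_zero_iff_dvd.mpr ⟨c, rfl⟩)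
    simpa using this
  · -- p ∤ t
    have htpos : 0 < t := by
      rcases Nat.eq_zero_or_pos t with h | h
      · exfalso; rw [h, zero_mul] at ht; omega
      · exact h
    have htlt : t < p := by
      have hm1 : 1 ≤ m := by
        rcases Nat.eq_zero_or_pos m with h | h
        · exfalso; rw [h, mul_zero] at ht; omega
        · exact h
      calc t ≤ t * m := Nat.le_mul_of_pos_right _ hm1
        _ = p - 1 := ht.symm
        _ < p := by omega
    have hpt : ¬ (p:ℤ) ∣ (t:ℤ) := by
      rw [Int.natCast_dvd_natCast]
      intro h
      exact absurd (Nat.le_of_dvd htpos h) (not_le.mpr htlt)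
    have hprime : Prime (p:ℤ) := Nat.prime_iff_prime_int.mp hp
    constructor
    · intro h
      rw [hfac, pow_two] at h
      have h1 : (p:ℤ) ∣ t*k + p*c := (mul_dvd_mul_iff_left (by positivity : (p:ℤ) ≠ 0)).mp h
      have h2 : (p:ℤ) ∣ (t:ℤ)*k := (dvd_add_right ⟨c, rfl⟩).mp (by rwa [add_comm] at h1)
      have h3 : (p:ℤ) ∣ k := (hprime.dvd_mul.mp h2).resolve_left hpt
      rw [hk, pow_two]
      exact mul_dvd_mul_left _ h3
    · intro h
      rw [hk, pow_two] at h
      have h3 : (p:ℤ) ∣ k := (mul_dvd_mul_iff_left (by positivity : (p:ℤ) ≠ 0)).mp h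
      rw [hfac, pow_two]
      exact mul_dvd_mul_left _ (dvd_add (Dvd.dvd.mul_left h3 _) ⟨c, rfl⟩)
end

section
/- Let p be a prime, z ∈ [1, p) an integer, and u ∈ [0, p) an integer. Then there exists a unique λ ∈ [0, p) such that Z = z + λp satisfies q_p(Z) ≡ u (mod p); moreover λ ≡ z·(q_p(z) − u) (mod p) and Z ≡ z^p − z·u·p (mod p²). Consequently, for each u, exactly p − 1 residues Z in [1, p²) coprime to p satisfy q_p(Z) ≡ u (mod p). -/
/-!
By the binomial theorem modulo `p²`, `(z + λp)^(p-1) ≡ z^(p-1) - z^(p-2) λ p`, so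
`q_p(z + λp) ≡ q_p(z) - λ z⁻¹ (mod p)`: along the lifts of a fixed residue `z`, the Fermat
quotient is an affine function of `λ` with invertible slope, and hence takes every value `u`
for exactly one `λ mod p`. This gives `λ ≡ z (q_p(z) - u)`, and `z^p = z + z q_p(z) p` turns it
into `Z ≡ z^p - z u p (mod p²)`. Writing `Z ∈ [1, p²)` as `Z % p + (Z / p) p`, the solutions
are in bijection with the `p - 1` nonzero residues `Z % p`.
-/

def fermatQuotient (p : ℕ) (x : ℤ) : ℤ := (x ^ (p - 1) - 1) / p

theorem Int.existsUnique_modEq_of_nonneg_of_lt (c : ℤ) {n : ℤ} (hn : 0 < n) :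
    ∃! x : ℤ, 0 ≤ x ∧ x < n ∧ x ≡ c [ZMOD n] :=
  ⟨c % n, ⟨Int.emod_nonneg _ hn.ne', Int.emod_lt_of_pos _ hn, Int.emod_emod_of_dvd _ dvd_rfl⟩,
    fun x ⟨hx0, hxn, hx⟩ => by rw [← Int.emod_eq_of_lt hx0 hxn]; exact hx⟩

theorem pow_add_mul_sub_one_div_modEq {m z : ℤ} {n : ℕ} (hm : m ≠ 0) (hz : m ∣ z ^ n - 1)
    (lam : ℤ) :
    ((z + lam * m) ^ n - 1) / m ≡ (z ^ n - 1) / m + n * z ^ (n - 1) * lam [ZMOD m] := by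
  obtain ⟨q, hq⟩ := hz
  obtain ⟨k, hk⟩ := sq_dvd_add_pow_sub_sub (lam * m) z n
  have hexpand : (z + lam * m) ^ n - 1 = m * (q + n * z ^ (n - 1) * lam + m * (lam ^ 2 * k)) := by
    linear_combination hk + hq
  rw [hexpand, hq, Int.mul_ediv_cancel_left _ hm, Int.mul_ediv_cancel_left _ hm]
  exact Int.modEq_add_fac_self

section Prime

variable {p : ℕ} [hp : Fact p.Prime] {z : ℤ}

theorem dvd_pow_sub_one_sub_one (hz : ¬ (p : ℤ) ∣ z) : (p : ℤ) ∣ z ^ (p - 1) - 1 :=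
  Int.prime_dvd_pow_sub_one hp.out
    ((Nat.prime_iff_prime_int.mp hp.out).coprime_iff_not_dvd.mpr hz).symm

theorem fermatQuotient_add_mul_cast (hz : ¬ (p : ℤ) ∣ z) (lam : ℤ) :
    (fermatQuotient p (z + lam * p) : ZMod p) = fermatQuotient p z - lam * (z : ZMod p)⁻¹ := by
  have h := pow_add_mul_sub_one_div_modEq (by exact_mod_cast hp.out.ne_zero)
    (dvd_pow_sub_one_sub_one hz) lam
  rw [← ZMod.intCast_eq_intCast_iff] at h
  push_cast at h
  rw [fermatQuotient, fermatQuotient, h]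
  have hz' : (z : ZMod p) ≠ 0 := by rwa [Ne, ZMod.intCast_zmod_eq_zero_iff_dvd]
  have hinv : (z : ZMod p) ^ (p - 1 - 1) = (z : ZMod p)⁻¹ := by
    refine eq_inv_of_mul_eq_one_left ?_
    rw [← pow_succ, Nat.sub_add_cancel (Nat.le_sub_one_of_lt hp.out.one_lt),
      ZMod.pow_card_sub_one_eq_one hz']
  rw [Nat.cast_pred hp.out.pos, ZMod.natCast_self, hinv]
  ring

theorem fermatQuotient_add_mul_modEq_iff (hz : ¬ (p : ℤ) ∣ z) (lam u : ℤ) :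
    fermatQuotient p (z + lam * p) ≡ u [ZMOD p] ↔
      lam ≡ z * (fermatQuotient p z - u) [ZMOD p] := by
  have hz' : (z : ZMod p) ≠ 0 := by rwa [Ne, ZMod.intCast_zmod_eq_zero_iff_dvd]
  rw [← ZMod.intCast_eq_intCast_iff, ← ZMod.intCast_eq_intCast_iff,
    fermatQuotient_add_mul_cast hz, Int.cast_mul, Int.cast_sub]
  constructor
  · intro h
    rw [← h]
    field_simp
    ring
  · intro h
    rw [h]
    field_simp
    ring

theorem add_mul_modEq_pow_sub_iff (hz : ¬ (p : ℤ) ∣ z) (lam u : ℤ) :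
    z + lam * p ≡ z ^ p - z * u * p [ZMOD (p : ℤ) ^ 2] ↔
      lam ≡ z * (fermatQuotient p z - u) [ZMOD p] := by
  have hq := Int.mul_ediv_cancel' (dvd_pow_sub_one_sub_one hz)
  have hzp : z ^ p = z * z ^ (p - 1) := by
    rw [← pow_succ', Nat.sub_add_cancel hp.out.one_le]
  have hrhs : z ^ p - z * u * p = z + z * (fermatQuotient p z - u) * p := by
    rw [fermatQuotient]; linear_combination hzp - z * hq
  rw [Int.modEq_iff_dvd, Int.modEq_iff_dvd, hrhs, sq,
    show ∀ c : ℤ, z + c * p - (z + lam * p) = (c - lam) * p by intro c; ring,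
    mul_dvd_mul_iff_right (by exact_mod_cast hp.out.ne_zero)]

theorem existsUnique_fermatQuotient_add_mul_modEq (hz : ¬ (p : ℤ) ∣ z) (u : ℤ) :
    ∃! lam : ℤ, 0 ≤ lam ∧ lam < p ∧ fermatQuotient p (z + lam * p) ≡ u [ZMOD p] := by
  simp only [fermatQuotient_add_mul_modEq_iff hz]
  exact Int.existsUnique_modEq_of_nonneg_of_lt _ (by exact_mod_cast hp.out.pos)

theorem coprime_iff_mod_ne_zero {Z : ℕ} : Nat.Coprime Z p ↔ Z % p ≠ 0 := by
  rw [Nat.coprime_comm, hp.out.coprime_iff_not_dvd, Nat.dvd_iff_mod_eq_zero]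

theorem bijOn_mod_fermatQuotient_modEq (u : ℤ) :
    Set.BijOn (· % p)
      {Z : ℕ | 1 ≤ Z ∧ Z < p ^ 2 ∧ Nat.Coprime Z p ∧ fermatQuotient p Z ≡ u [ZMOD p]}
      (Set.Ico 1 p) := by
  have hndvd {a : ℕ} (ha : a ∈ Set.Ico 1 p) : ¬ (p : ℤ) ∣ a := by
    rw [Int.natCast_dvd_natCast]
    exact Nat.not_dvd_of_pos_of_lt ha.1 ha.2
  have hdiv {Z : ℕ} (hZ : Z < p ^ 2) (hq : fermatQuotient p Z ≡ u [ZMOD p]) :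
      0 ≤ ((Z / p : ℕ) : ℤ) ∧ ((Z / p : ℕ) : ℤ) < p ∧
        fermatQuotient p ((Z % p : ℕ) + (Z / p : ℕ) * p) ≡ u [ZMOD p] := by
    refine ⟨by positivity, by exact_mod_cast Nat.div_lt_of_lt_mul (by rwa [← sq]), ?_⟩
    rwa [show ((Z % p : ℕ) : ℤ) + (Z / p : ℕ) * p = Z by exact_mod_cast Nat.mod_add_div' Z p]
  have hmaps {Z : ℕ} (hZ : Nat.Coprime Z p) : Z % p ∈ Set.Ico 1 p :=
    ⟨Nat.one_le_iff_ne_zero.mpr (coprime_iff_mod_ne_zero.mp hZ), Nat.mod_lt _ hp.out.pos⟩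
  refine ⟨fun Z hZ => hmaps hZ.2.2.1, ?_, ?_⟩
  · rintro Z ⟨-, hZ, hZcop, hZq⟩ W ⟨-, hW, -, hWq⟩ (hmod : Z % p = W % p)
    have hdiv_eq : ((Z / p : ℕ) : ℤ) = (W / p : ℕ) :=
      (existsUnique_fermatQuotient_add_mul_modEq (hndvd (hmaps hZcop)) u).unique
        (hdiv hZ hZq) (hmod ▸ hdiv hW hWq)
    rw [← Nat.mod_add_div' Z p, ← Nat.mod_add_div' W p, hmod, Nat.cast_inj.mp hdiv_eq]
  · intro a ha
    obtain ⟨lam, ⟨hlam0, hlamp, hq⟩, -⟩ :=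
      existsUnique_fermatQuotient_add_mul_modEq (hndvd ha) u
    lift lam to ℕ using hlam0
    have hmod : (a + lam * p) % p = a := by
      rw [Nat.add_mul_mod_self_right, Nat.mod_eq_of_lt ha.2]
    have hlt : a + lam * p < p ^ 2 := by
      have : lam + 1 ≤ p := by exact_mod_cast hlamp
      nlinarith [ha.2]
    refine ⟨a + lam * p,
      ⟨Nat.le_add_right_of_le ha.1, hlt, coprime_iff_mod_ne_zero.mpr ?_, ?_⟩, hmod⟩
    · rw [hmod]; exact Nat.one_le_iff_ne_zero.mp ha.1
    · exact_mod_cast hq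

theorem ncard_fermatQuotient_modEq (u : ℤ) :
    {Z : ℕ | 1 ≤ Z ∧ Z < p ^ 2 ∧ Nat.Coprime Z p ∧ fermatQuotient p Z ≡ u [ZMOD p]}.ncard
      = p - 1 := by
  rw [(bijOn_mod_fermatQuotient_modEq u).ncard_eq, ← Finset.coe_Ico, Set.ncard_coe_finset,
    Nat.card_Ico]

end Prime

theorem fermat_quotient_lift_unique_general
    (p : ℕ) (hp : p.Prime) (z u : ℤ) (hz1 : 1 ≤ z) (hzp : z < p) :
    (∃! lam : ℤ, 0 ≤ lam ∧ lam < p ∧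
        (((z + lam * p) ^ (p - 1) - 1) / p ≡ u [ZMOD p]) ∧
        (lam ≡ z * ((z ^ (p - 1) - 1) / p - u) [ZMOD p]) ∧
        (z + lam * p ≡ z ^ p - z * u * p [ZMOD (p : ℤ) ^ 2])) ∧
      {Z : ℕ | 1 ≤ Z ∧ Z < p ^ 2 ∧ Nat.Coprime Z p ∧
        (((Z : ℤ) ^ (p - 1) - 1) / p ≡ u [ZMOD p])}.ncard = p - 1 := by
  have := Fact.mk hp
  have hz : ¬ (p : ℤ) ∣ z := fun h => absurd (Int.le_of_dvd (by omega) h) (by omega)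
  refine ⟨(existsUnique_congr fun lam => ?_).mp (existsUnique_fermatQuotient_add_mul_modEq hz u),
    ncard_fermatQuotient_modEq u⟩
  refine and_congr_right fun _ => and_congr_right fun _ => ?_
  have hlift := fermatQuotient_add_mul_modEq_iff hz lam u
  have hsq := add_mul_modEq_pow_sub_iff hz lam u
  exact ⟨fun h => ⟨h, hlift.mp h, hsq.mpr (hlift.mp h)⟩, fun h => h.1⟩

/-- For `p` prime, `z ∈ [1, p)` and `u ∈ [0, p)` there is a unique
`λ ∈ [0, p)` such that `Z = z + λ p` satisfies `q_p(Z) ≡ u (mod p)`;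
moreover `λ ≡ z (q_p(z) - u) (mod p)` and `Z ≡ z^p - z u p (mod p²)`.
Consequently exactly `p - 1` residues `Z ∈ [1, p²)` coprime to `p` satisfy
`q_p(Z) ≡ u (mod p)`. -/
theorem fermat_quotient_lift_unique
    (p : ℕ) (hp : p.Prime) (z u : ℤ) (hz1 : 1 ≤ z) (hzp : z < p)
    (hu0 : 0 ≤ u) (hup : u < p) :
    (∃! lam : ℤ, 0 ≤ lam ∧ lam < p ∧
        (((z + lam * p) ^ (p - 1) - 1) / p ≡ u [ZMOD p]) ∧
        (lam ≡ z * ((z ^ (p - 1) - 1) / p - u) [ZMOD p]) ∧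
        (z + lam * p ≡ z ^ p - z * u * p [ZMOD (p : ℤ) ^ 2])) ∧
      {Z : ℕ | 1 ≤ Z ∧ Z < p ^ 2 ∧ Nat.Coprime Z p ∧
        (((Z : ℤ) ^ (p - 1) - 1) / p ≡ u [ZMOD p])}.ncard = p - 1 :=
  fermat_quotient_lift_unique_general p hp z u hz1 hzp
end

section
/- For integers 0 ≤ n ≤ N and every real t ≥ 1, one has Σ_{j=n}^{N} C(N,j)·(t−1)^{N−j} ≤ C(N,n)·t^{N−n}. In particular, for a prime p and 0 ≤ n ≤ p−2, (1/p^{p-2})·Σ_{j=n}^{p-2} C(p−2,j)·(p−1)^{p−2−j} ≤ C(p−2,n)/p^n. -/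
open Finset

/-!
With `x = t - 1 ≥ 0` and `k = N - j`, the left side is `Σ_{k ≤ N-n} C(N,k) x^k`, while the binomial
theorem expands the right side as `C(N,n) (x + 1)^(N-n) = Σ_{k ≤ N-n} C(N,n) C(N-n,k) x^k`. The
inequality holds term by term: `C(N,k) ≤ C(N,k) C(N-k,n) = C(N,n+k) C(n+k,k) = C(N,n) C(N-n,k)`.
-/

theorem Nat.choose_le_choose_mul_choose_sub {N n k : ℕ} (h : n + k ≤ N) :
    N.choose k ≤ N.choose n * (N - n).choose k := by
  have hk := Nat.choose_mul (n := N) (k := n + k) (s := k) (Nat.le_add_left k n)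
  have hn := Nat.choose_mul (n := N) (k := n + k) (s := n) (Nat.le_add_right n k)
  rw [Nat.add_sub_cancel] at hk
  rw [Nat.add_sub_cancel_left] at hn
  calc N.choose k ≤ N.choose k * (N - k).choose n :=
        Nat.le_mul_of_pos_right _ (Nat.choose_pos (by omega))
    _ = N.choose (n + k) * (n + k).choose k := hk.symm
    _ = N.choose n * (N - n).choose k := by rw [← Nat.choose_symm_add, hn]

theorem Finset.sum_Icc_choose_mul_pow_sub {R : Type*} [CommSemiring R] (x : R) {N n : ℕ}
    (hn : n ≤ N) :
    ∑ j ∈ Icc n N, (N.choose j : R) * x ^ (N - j) =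
      ∑ k ∈ range (N - n + 1), (N.choose k : R) * x ^ k := by
  have hsymm : ∀ j ∈ Ico n (N + 1),
      (N.choose j : R) * x ^ (N - j) = (N.choose (N - j) : R) * x ^ (N - j) := by
    intro j hj
    rw [Nat.choose_symm (by simp only [mem_Ico] at hj; omega)]
  rw [← Ico_add_one_right_eq_Icc, sum_congr rfl hsymm,
    sum_Ico_reflect (fun k ↦ (N.choose k : R) * x ^ k) n le_rfl, Nat.sub_self,
    Nat.Ico_zero_eq_range, Nat.succ_sub hn]

theorem Finset.sum_Icc_choose_mul_pow_sub_le {R : Type*} [CommSemiring R] [PartialOrder R]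
    [IsOrderedRing R] {x : R} (hx : 0 ≤ x) {N n : ℕ} (hn : n ≤ N) :
    ∑ j ∈ Icc n N, (N.choose j : R) * x ^ (N - j) ≤ (N.choose n : R) * (x + 1) ^ (N - n) := by
  calc ∑ j ∈ Icc n N, (N.choose j : R) * x ^ (N - j)
      = ∑ k ∈ range (N - n + 1), (N.choose k : R) * x ^ k := sum_Icc_choose_mul_pow_sub x hn
    _ ≤ ∑ k ∈ range (N - n + 1), (N.choose n : R) * (N - n).choose k * x ^ k := by
      gcongr with k hk
      have hnk : n + k ≤ N := by simp only [mem_range] at hk; omega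
      exact_mod_cast Nat.mono_cast (Nat.choose_le_choose_mul_choose_sub hnk)
    _ = (N.choose n : R) * (x + 1) ^ (N - n) := by
      rw [add_pow, mul_sum]
      exact sum_congr rfl fun k _ ↦ by ring

theorem one_div_pow_mul_sum_Icc_choose_mul_sub_one_pow_le {N n : ℕ} (hn : n ≤ N) {t : ℝ}
    (ht : 1 ≤ t) :
    1 / t ^ N * ∑ j ∈ Icc n N, (N.choose j : ℝ) * (t - 1) ^ (N - j) ≤
      (N.choose n : ℝ) / t ^ n := by
  have hbound := sum_Icc_choose_mul_pow_sub_le (sub_nonneg.2 ht) hn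
  rw [sub_add_cancel] at hbound
  have ht0 : 0 < t := by linarith
  have hsplit : t ^ N = t ^ (N - n) * t ^ n := by rw [← pow_add, Nat.sub_add_cancel hn]
  rw [one_div, inv_mul_le_iff₀ (by positivity), hsplit]
  calc _ ≤ (N.choose n : ℝ) * t ^ (N - n) := hbound
    _ = t ^ (N - n) * t ^ n * ((N.choose n : ℝ) / t ^ n) := by field_simp

/-- For `0 ≤ n ≤ N` and real `t ≥ 1`,
`Σ_{j=n}^N C(N,j) (t-1)^(N-j) ≤ C(N,n) t^(N-n)`; in particular for a prime
`p` and `n ≤ p-2`,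
`p^{-(p-2)} Σ_{j=n}^{p-2} C(p-2,j)(p-1)^{p-2-j} ≤ C(p-2,n)/p^n`. -/
theorem binomial_tail_sum_le
    : (∀ N n : ℕ, n ≤ N → ∀ t : ℝ, 1 ≤ t →
        ∑ j ∈ Finset.Icc n N, (N.choose j : ℝ) * (t - 1) ^ (N - j) ≤
          (N.choose n : ℝ) * t ^ (N - n)) ∧
      (∀ p n : ℕ, p.Prime → n ≤ p - 2 →
        (1 / (p : ℝ) ^ (p - 2)) *
            ∑ j ∈ Finset.Icc n (p - 2),
              ((p - 2).choose j : ℝ) * ((p : ℝ) - 1) ^ (p - 2 - j) ≤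
          ((p - 2).choose n : ℝ) / (p : ℝ) ^ n) := by
  refine ⟨fun N n hn t ht ↦ ?_, fun p n hp hn ↦ ?_⟩
  · simpa only [sub_add_cancel] using sum_Icc_choose_mul_pow_sub_le (sub_nonneg.2 ht) hn
  · exact one_div_pow_mul_sum_Icc_choose_mul_sub_one_pow_le hn (mod_cast hp.one_le)
end
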